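/- arXiv:0802.1334 — 7 statements merged into one kernel-verified Lean document; each statement's English description precedes it below -/
import Mathlib

section
/- Let φ : [α₁,α₂] → [β₁,β₂] be a continuous strictly increasing bijection with inverse ψ : [β₁,β₂] → [α₁,α₂], and define F(a,b) = ∫_{α₁}^{a} φ(x) dx + ∫_{β₁}^{b} ψ(x) dx − a·b + α₁·β₁. Then for every a ∈ [α₁,α₂] and b ∈ [β₁,β₂] one has 0 ≤ F(a,b) ≤ −(ψ(b) − a)·(φ(a) − b). -/
/-! The function `H u = ∫_{α₁}^u φ + ∫_{φ α₁}^{φ u} ψ - u φ u` has increments bounded by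
`(t - s) (φ t - φ s)`, since both integrals are squeezed between the values of their monotone
integrands at the endpoints. As `φ` is continuous this is `o(t - s)`, so `H` is constant and
`∫_{α₁}^a φ + ∫_{β₁}^{φ a} ψ = a φ a - α₁ β₁`. Then `F(a, b) = ∫_{φ a}^b ψ - a (b - φ a)`, and the
same endpoint squeeze of `∫_{φ a}^b ψ` between `a (b - φ a)` and `ψ b (b - φ a)` gives both bounds. -/

open Set intervalIntegral Filter Topology Asymptotics

theorem hasDerivWithinAt_zero_of_abs_sub_le_mul {f g : ℝ → ℝ} {s : Set ℝ} {x : ℝ}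
    (hg : ContinuousWithinAt g s x) (h : ∀ t ∈ s, |f t - f x| ≤ |t - x| * |g t - g x|) :
    HasDerivWithinAt f 0 s x := by
  rw [hasDerivWithinAt_iff_isLittleO]
  have hg' : (fun t => g t - g x) =o[𝓝[s] x] fun _ => (1 : ℝ) :=
    (isLittleO_one_iff ℝ).2 (by simpa using hg.tendsto.sub_const (g x))
  have hbound := (isBigO_refl (fun t => t - x) _).mul_isLittleO hg'
  simp only [mul_one] at hbound
  refine IsBigO.trans_isLittleO (IsBigO.of_bound' ?_) hbound
  filter_upwards [self_mem_nhdsWithin] with t ht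
  simpa [abs_mul] using h t ht

theorem constant_of_abs_sub_le_mul_abs_sub {f g : ℝ → ℝ} {a b : ℝ}
    (hg : ContinuousOn g (Icc a b))
    (h : ∀ s ∈ Icc a b, ∀ t ∈ Icc a b, |f t - f s| ≤ |t - s| * |g t - g s|) :
    ∀ x ∈ Icc a b, f x = f a := by
  have hf : ∀ x ∈ Icc a b, HasDerivWithinAt f 0 (Icc a b) x := fun x hx =>
    hasDerivWithinAt_zero_of_abs_sub_le_mul (hg x hx) (h x hx)
  refine constant_of_has_deriv_right_zero (fun x hx => (hf x hx).continuousWithinAt) fun x hx => ?_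
  exact (hf x (Ico_subset_Icc_self hx)).mono_of_mem_nhdsWithin
    (mem_of_superset (Icc_mem_nhdsGE hx.2) (Icc_subset_Icc_left hx.1))

section MonotoneIntegral

variable {f : ℝ → ℝ} {a b : ℝ}

theorem MonotoneOn.intervalIntegral_mem_Icc_of_le (hf : MonotoneOn f (Icc a b)) (hab : a ≤ b) :
    ∫ x in a..b, f x ∈ Icc ((b - a) * f a) ((b - a) * f b) := by
  have hfi : IntervalIntegrable f MeasureTheory.volume a b :=
    (uIcc_of_le hab ▸ hf).intervalIntegrable
  constructor
  · simpa using integral_mono_on hab intervalIntegrable_const hfi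
      fun x hx => hf (left_mem_Icc.2 hab) hx hx.1
  · simpa using integral_mono_on hab hfi intervalIntegrable_const
      fun x hx => hf hx (right_mem_Icc.2 hab) hx.2

theorem MonotoneOn.sub_mul_le_intervalIntegral (hf : MonotoneOn f (uIcc a b)) :
    (b - a) * f a ≤ ∫ x in a..b, f x := by
  rcases le_total a b with hab | hba
  · exact ((uIcc_of_le hab ▸ hf).intervalIntegral_mem_Icc_of_le hab).1
  · rw [integral_symm]
    linarith [((uIcc_of_ge hba ▸ hf).intervalIntegral_mem_Icc_of_le hba).2]

theorem MonotoneOn.intervalIntegral_le_sub_mul (hf : MonotoneOn f (uIcc a b)) :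
    ∫ x in a..b, f x ≤ (b - a) * f b := by
  rw [integral_symm]
  linarith [(uIcc_comm a b ▸ hf).sub_mul_le_intervalIntegral]

end MonotoneIntegral

section InverseIntegral

variable {φ ψ : ℝ → ℝ}

theorem StrictMonoOn.strictMonoOn_of_leftInvOn {s t : Set ℝ} (hφ : StrictMonoOn φ s)
    (hinv : LeftInvOn ψ φ s) (hsurj : SurjOn φ s t) : StrictMonoOn ψ t := by
  intro y₁ hy₁ y₂ hy₂ hy
  obtain ⟨x₁, hx₁, rfl⟩ := hsurj hy₁
  obtain ⟨x₂, hx₂, rfl⟩ := hsurj hy₂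
  rw [hinv hx₁, hinv hx₂]
  exact (hφ.lt_iff_lt hx₁ hx₂).1 hy

theorem abs_integral_add_integral_sub_le {s t : ℝ} (hφ : MonotoneOn φ (uIcc s t))
    (hψ : MonotoneOn ψ (uIcc (φ s) (φ t))) (hs : ψ (φ s) = s) (ht : ψ (φ t) = t) :
    |(∫ x in s..t, φ x) + (∫ y in φ s..φ t, ψ y) - (t * φ t - s * φ s)|
      ≤ (t - s) * (φ t - φ s) := by
  have hφ_ge := hφ.sub_mul_le_intervalIntegral
  have hφ_le := hφ.intervalIntegral_le_sub_mul
  have hψ_ge := hψ.sub_mul_le_intervalIntegral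
  have hψ_le := hψ.intervalIntegral_le_sub_mul
  rw [hs] at hψ_ge
  rw [ht] at hψ_le
  rw [abs_le]
  constructor <;> linarith

theorem integral_add_integral_of_leftInvOn {a b x : ℝ} (hφc : ContinuousOn φ (Icc a b))
    (hφ : MonotoneOn φ (Icc a b)) (hψ : MonotoneOn ψ (Icc (φ a) (φ b)))
    (hinv : LeftInvOn ψ φ (Icc a b)) (hx : x ∈ Icc a b) :
    (∫ t in a..x, φ t) + (∫ y in φ a..φ x, ψ y) = x * φ x - a * φ a := by
  have ha : a ∈ Icc a b := left_mem_Icc.2 (hx.1.trans hx.2)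
  have hφ_uIcc {s t} (hs : s ∈ Icc a b) (ht : t ∈ Icc a b) : MonotoneOn φ (uIcc s t) :=
    hφ.mono (uIcc_subset_Icc hs ht)
  have hψ_uIcc {s t} (hs : s ∈ Icc a b) (ht : t ∈ Icc a b) : MonotoneOn ψ (uIcc (φ s) (φ t)) :=
    hψ.mono (uIcc_subset_Icc (hφ.mapsTo_Icc hs) (hφ.mapsTo_Icc ht))
  set H : ℝ → ℝ := fun u => (∫ t in a..u, φ t) + (∫ y in φ a..φ u, ψ y) - u * φ u with hH
  have hH_incr : ∀ s ∈ Icc a b, ∀ t ∈ Icc a b, |H t - H s| ≤ |t - s| * |φ t - φ s| := by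
    intro s hs t ht
    have hdiff : H t - H s
        = (∫ x in s..t, φ x) + (∫ y in φ s..φ t, ψ y) - (t * φ t - s * φ s) := by
      rw [← integral_interval_sub_left (hφ_uIcc ha ht).intervalIntegrable
          (hφ_uIcc ha hs).intervalIntegrable,
        ← integral_interval_sub_left (hψ_uIcc ha ht).intervalIntegrable
          (hψ_uIcc ha hs).intervalIntegrable]
      ring
    rw [hdiff, ← abs_mul]
    exact (abs_integral_add_integral_sub_le (hφ_uIcc hs ht) (hψ_uIcc hs ht) (hinv hs) (hinv ht)).trans
      (le_abs_self _)
  have hHx := constant_of_abs_sub_le_mul_abs_sub hφc hH_incr x hx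
  simp only [hH, integral_same, zero_add] at hHx
  linarith

end InverseIntegral

theorem young_inequality_with_upper_bound_general
    (α₁ α₂ β₁ β₂ : ℝ) (φ ψ : ℝ → ℝ)
    (hcont : ContinuousOn φ (Icc α₁ α₂))
    (hmono : StrictMonoOn φ (Icc α₁ α₂))
    (hbij : BijOn φ (Icc α₁ α₂) (Icc β₁ β₂))
    (hinvL : ∀ x ∈ Icc α₁ α₂, ψ (φ x) = x)
    (a b : ℝ) (ha : a ∈ Icc α₁ α₂) (hb : b ∈ Icc β₁ β₂) :
    0 ≤ (∫ x in α₁..a, φ x) + (∫ x in β₁..b, ψ x) - a * b + α₁ * β₁ ∧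
    (∫ x in α₁..a, φ x) + (∫ x in β₁..b, ψ x) - a * b + α₁ * β₁
      ≤ -(ψ b - a) * (φ a - b) := by
  have hα₁ : α₁ ∈ Icc α₁ α₂ := left_mem_Icc.2 (ha.1.trans ha.2)
  have hα₂ : α₂ ∈ Icc α₁ α₂ := right_mem_Icc.2 (ha.1.trans ha.2)
  have hφa := hbij.mapsTo ha
  have hψ : MonotoneOn ψ (Icc β₁ β₂) :=
    (hmono.strictMonoOn_of_leftInvOn hinvL hbij.surjOn).monotoneOn
  have hφα₁ : φ α₁ = β₁ := by
    obtain ⟨x, hx, hφx⟩ := hbij.surjOn (left_mem_Icc.2 (hb.1.trans hb.2))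
    exact le_antisymm (hφx ▸ hmono.monotoneOn hα₁ hx hx.1) (hbij.mapsTo hα₁).1
  have hyoung := integral_add_integral_of_leftInvOn hcont hmono.monotoneOn
    (hψ.mono (Icc_subset_Icc hφα₁.ge (hbij.mapsTo hα₂).2)) hinvL ha
  rw [hφα₁] at hyoung
  have hsplit : (∫ y in β₁..φ a, ψ y) + (∫ y in φ a..b, ψ y) = ∫ y in β₁..b, ψ y :=
    integral_add_adjacent_intervals ((hψ.mono (uIcc_subset_Icc (left_mem_Icc.2 (hb.1.trans hb.2)) hφa)).intervalIntegrable)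
    ((hψ.mono (uIcc_subset_Icc hφa hb)).intervalIntegrable)
  have hψ_ge := (hψ.mono (uIcc_subset_Icc hφa hb)).sub_mul_le_intervalIntegral
  have hψ_le := (hψ.mono (uIcc_subset_Icc hφa hb)).intervalIntegral_le_sub_mul
  rw [hinvL a ha] at hψ_ge
  constructor <;> linarith

theorem young_inequality_with_upper_bound
    (α₁ α₂ β₁ β₂ : ℝ) (φ ψ : ℝ → ℝ)
    (hα : α₁ < α₂) (hβ : β₁ < β₂)
    (hcont : ContinuousOn φ (Icc α₁ α₂))
    (hmono : StrictMonoOn φ (Icc α₁ α₂))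
    (hbij : BijOn φ (Icc α₁ α₂) (Icc β₁ β₂))
    (hinvL : ∀ x ∈ Icc α₁ α₂, ψ (φ x) = x)
    (hinvR : ∀ y ∈ Icc β₁ β₂, φ (ψ y) = y)
    (hψmaps : MapsTo ψ (Icc β₁ β₂) (Icc α₁ α₂))
    (a b : ℝ) (ha : a ∈ Icc α₁ α₂) (hb : b ∈ Icc β₁ β₂) :
    0 ≤ (∫ x in α₁..a, φ x) + (∫ x in β₁..b, ψ x) - a * b + α₁ * β₁ ∧
    (∫ x in α₁..a, φ x) + (∫ x in β₁..b, ψ x) - a * b + α₁ * β₁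
      ≤ -(ψ b - a) * (φ a - b) :=
  young_inequality_with_upper_bound_general α₁ α₂ β₁ β₂ φ ψ hcont hmono hbij hinvL a b ha hb
end

section
/- Let φ : [α₁,α₂] → [β₁,β₂] be a continuous strictly increasing bijection with inverse ψ : [β₁,β₂] → [α₁,α₂], and define F(a,b) = ∫_{α₁}^{a} φ(x) dx + ∫_{β₁}^{b} ψ(x) dx − a·b + α₁·β₁. Then for every a ∈ [α₁,α₂] and b ∈ [β₁,β₂], the equality F(a,b) = 0 holds if and only if the equality F(a,b) = −(ψ(b) − a)·(φ(a) − b) holds. -/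
/-!
Along the graph `b = φ a` the gap vanishes: the increment of `t ↦ F(t, φ t)` over `[t₁, t₂]` is
squeezed between `±(t₂ - t₁)(φ t₂ - φ t₁)` by monotonicity of `φ` and `ψ`, and these bounds sum to
`O(1/n)` over a partition into `n` equal pieces. Hence `F(a, b) = ∫_{ψ b}^a (φ x - b) dx`, which by
strict monotonicity lies strictly between `0` and `(a - ψ b)(φ a - b)` unless `a = ψ b`, where both
sides of the equivalence hold.
-/

open Set intervalIntegral

/-- The function `F` of the statement. -/
noncomputable def youngGap (φ ψ : ℝ → ℝ) (α₁ β₁ a b : ℝ) : ℝ :=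
  (∫ x in α₁..a, φ x) + (∫ x in β₁..b, ψ x) - a * b + α₁ * β₁

theorem eq_of_abs_sub_le_mul_sub {f g : ℝ → ℝ} {a b : ℝ} (hab : a ≤ b)
    (h : ∀ x ∈ Icc a b, ∀ y ∈ Icc a b, x ≤ y → |f y - f x| ≤ (y - x) * (g y - g x)) :
    f b = f a := by
  have key : ∀ n : ℕ, 0 < n → |f b - f a| ≤ (b - a) * (g b - g a) / n := by
    intro n hn
    have hn' : (0 : ℝ) < n := Nat.cast_pos.mpr hn
    set x : ℕ → ℝ := fun i => a + i * ((b - a) / n) with hx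
    have hstep : ∀ i, x (i + 1) - x i = (b - a) / n := fun i => by simp only [hx]; push_cast; ring
    have hx0 : x 0 = a := by simp [hx]
    have hxn : x n = b := by simp only [hx]; field_simp; ring
    have hd : 0 ≤ (b - a) / n := div_nonneg (sub_nonneg.mpr hab) hn'.le
    have hmem : ∀ i ≤ n, x i ∈ Icc a b := fun i hi => by
      have hi' : (i : ℝ) ≤ n := Nat.cast_le.mpr hi
      refine ⟨le_add_of_nonneg_right (by positivity), ?_⟩
      rw [← hxn]; simp only [hx]; gcongr
    calc |f b - f a| = |∑ i ∈ Finset.range n, (f (x (i + 1)) - f (x i))| := by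
          rw [Finset.sum_range_sub (fun i => f (x i)), hx0, hxn]
      _ ≤ ∑ i ∈ Finset.range n, |f (x (i + 1)) - f (x i)| := Finset.abs_sum_le_sum_abs _ _
      _ ≤ ∑ i ∈ Finset.range n, (b - a) / n * (g (x (i + 1)) - g (x i)) := by
          refine Finset.sum_le_sum fun i hi => ?_
          have hi := Finset.mem_range.mp hi
          rw [← hstep i]
          exact h _ (hmem i hi.le) _ (hmem (i + 1) hi) (by linarith [hstep i])
      _ = (b - a) * (g b - g a) / n := by
          rw [← Finset.mul_sum, Finset.sum_range_sub (fun i => g (x i)), hx0, hxn]; ring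
  have hlim := tendsto_const_div_atTop_nhds_zero_nat ((b - a) * (g b - g a))
  have h0 : |f b - f a| ≤ 0 := ge_of_tendsto hlim (Filter.eventually_atTop.mpr ⟨1, key⟩)
  exact sub_eq_zero.mp (abs_nonpos_iff.mp h0)

section IntegralBounds

variable {f : ℝ → ℝ} {u v : ℝ}

theorem MonotoneOn.sub_mul_le_integral (hf : MonotoneOn f (Icc u v)) (huv : u ≤ v) :
    (v - u) * f u ≤ ∫ x in u..v, f x := by
  have hi : IntervalIntegrable f MeasureTheory.volume u v :=
    MonotoneOn.intervalIntegrable (by rwa [uIcc_of_le huv])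
  simpa using integral_mono_on huv intervalIntegrable_const hi
    fun x hx => hf (left_mem_Icc.mpr huv) hx hx.1

theorem MonotoneOn.integral_le_sub_mul (hf : MonotoneOn f (Icc u v)) (huv : u ≤ v) :
    ∫ x in u..v, f x ≤ (v - u) * f v := by
  have hi : IntervalIntegrable f MeasureTheory.volume u v :=
    MonotoneOn.intervalIntegrable (by rwa [uIcc_of_le huv])
  simpa using integral_mono_on huv hi intervalIntegrable_const
    fun x hx => hf hx (right_mem_Icc.mpr huv) hx.2

theorem StrictMonoOn.sub_mul_lt_integral (hf : StrictMonoOn f (Icc u v)) (huv : u < v) :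
    (v - u) * f u < ∫ x in u..v, f x := by
  have hi : IntervalIntegrable f MeasureTheory.volume u v :=
    MonotoneOn.intervalIntegrable (by rw [uIcc_of_le huv.le]; exact hf.monotoneOn)
  have hpos := intervalIntegral_pos_of_pos_on (hi.sub intervalIntegrable_const)
    (fun x hx => sub_pos.mpr (hf (left_mem_Icc.mpr huv.le) (Ioo_subset_Icc_self hx) hx.1)) huv
  simpa [integral_sub hi intervalIntegrable_const] using hpos

theorem StrictMonoOn.integral_lt_sub_mul (hf : StrictMonoOn f (Icc u v)) (huv : u < v) :
    ∫ x in u..v, f x < (v - u) * f v := by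
  have hi : IntervalIntegrable f MeasureTheory.volume u v :=
    MonotoneOn.intervalIntegrable (by rw [uIcc_of_le huv.le]; exact hf.monotoneOn)
  have hpos := intervalIntegral_pos_of_pos_on (intervalIntegrable_const.sub hi)
    (fun x hx => sub_pos.mpr (hf (Ioo_subset_Icc_self hx) (right_mem_Icc.mpr huv.le) hx.2)) huv
  simpa [integral_sub intervalIntegrable_const hi] using hpos

end IntegralBounds

theorem StrictMonoOn.integral_sub_mul_mem_Ioo {f : ℝ → ℝ} {s a : ℝ}
    (hf : StrictMonoOn f (uIcc s a)) (hsa : s ≠ a) :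
    (∫ x in s..a, f x) - (a - s) * f s ∈ Ioo 0 ((a - s) * (f a - f s)) := by
  rcases hsa.lt_or_gt with hlt | hgt
  · rw [uIcc_of_le hlt.le] at hf
    have h₁ := hf.sub_mul_lt_integral hlt
    have h₂ := hf.integral_lt_sub_mul hlt
    constructor <;> linarith
  · rw [uIcc_of_ge hgt.le] at hf
    have h₁ := hf.sub_mul_lt_integral hgt
    have h₂ := hf.integral_lt_sub_mul hgt
    rw [integral_symm]
    constructor <;> linarith

section YoungGap

variable {φ ψ : ℝ → ℝ} {α₁ α₂ β₁ β₂ : ℝ}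

theorem abs_youngGap_graph_sub_le (hφ : MonotoneOn φ (Icc α₁ α₂))
    (hψ : MonotoneOn ψ (Icc β₁ β₂)) (hmaps : MapsTo φ (Icc α₁ α₂) (Icc β₁ β₂))
    (hinv : LeftInvOn ψ φ (Icc α₁ α₂)) {t₁ t₂ : ℝ} (h₁ : t₁ ∈ Icc α₁ α₂)
    (h₂ : t₂ ∈ Icc α₁ α₂) (h₁₂ : t₁ ≤ t₂) :
    |youngGap φ ψ α₁ β₁ t₂ (φ t₂) - youngGap φ ψ α₁ β₁ t₁ (φ t₁)|
      ≤ (t₂ - t₁) * (φ t₂ - φ t₁) := by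
  have hα₁ : α₁ ∈ Icc α₁ α₂ := ⟨le_rfl, h₁.1.trans h₁.2⟩
  have hβ₁ : β₁ ∈ Icc β₁ β₂ := ⟨le_rfl, (hmaps h₁).1.trans (hmaps h₁).2⟩
  have hφint {x y} (hx : x ∈ Icc α₁ α₂) (hy : y ∈ Icc α₁ α₂) :
      IntervalIntegrable φ MeasureTheory.volume x y :=
    (hφ.mono (uIcc_subset_Icc hx hy)).intervalIntegrable
  have hψint {x y} (hx : x ∈ Icc β₁ β₂) (hy : y ∈ Icc β₁ β₂) :
      IntervalIntegrable ψ MeasureTheory.volume x y :=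
    (hψ.mono (uIcc_subset_Icc hx hy)).intervalIntegrable
  have hφ₁₂ : φ t₁ ≤ φ t₂ := hφ h₁ h₂ h₁₂
  have hφ' : MonotoneOn φ (Icc t₁ t₂) := hφ.mono (Icc_subset_Icc h₁.1 h₂.2)
  have hψ' : MonotoneOn ψ (Icc (φ t₁) (φ t₂)) := hψ.mono (Icc_subset_Icc (hmaps h₁).1 (hmaps h₂).2)
  have hA₁ := hφ'.sub_mul_le_integral h₁₂
  have hA₂ := hφ'.integral_le_sub_mul h₁₂
  have hB₁ := hψ'.sub_mul_le_integral hφ₁₂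
  have hB₂ := hψ'.integral_le_sub_mul hφ₁₂
  rw [hinv h₁] at hB₁
  rw [hinv h₂] at hB₂
  have hdiff : youngGap φ ψ α₁ β₁ t₂ (φ t₂) - youngGap φ ψ α₁ β₁ t₁ (φ t₁)
      = (∫ x in t₁..t₂, φ x) + (∫ y in φ t₁..φ t₂, ψ y) - t₂ * φ t₂ + t₁ * φ t₁ := by
    rw [← integral_interval_sub_left (hφint hα₁ h₂) (hφint hα₁ h₁),
      ← integral_interval_sub_left (hψint hβ₁ (hmaps h₂)) (hψint hβ₁ (hmaps h₁))]
    unfold youngGap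
    ring
  rw [hdiff, abs_le]
  constructor <;> linarith

theorem youngGap_graph_eq_zero (hφ : MonotoneOn φ (Icc α₁ α₂))
    (hψ : MonotoneOn ψ (Icc β₁ β₂)) (hmaps : MapsTo φ (Icc α₁ α₂) (Icc β₁ β₂))
    (hinv : LeftInvOn ψ φ (Icc α₁ α₂)) (hφα₁ : φ α₁ = β₁) {t : ℝ} (ht : t ∈ Icc α₁ α₂) :
    youngGap φ ψ α₁ β₁ t (φ t) = 0 := by
  have hsub : Icc α₁ t ⊆ Icc α₁ α₂ := Icc_subset_Icc_right ht.2
  have hconst := eq_of_abs_sub_le_mul_sub (f := fun t => youngGap φ ψ α₁ β₁ t (φ t)) ht.1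
    fun x hx y hy hxy => abs_youngGap_graph_sub_le hφ hψ hmaps hinv (hsub hx) (hsub hy) hxy
  rw [hconst]
  simp [youngGap, hφα₁]

theorem youngGap_graph_eq (hφ : MonotoneOn φ (Icc α₁ α₂))
    (hψ : MonotoneOn ψ (Icc β₁ β₂)) (hmaps : MapsTo φ (Icc α₁ α₂) (Icc β₁ β₂))
    (hinv : LeftInvOn ψ φ (Icc α₁ α₂)) (hφα₁ : φ α₁ = β₁) {a s : ℝ} (ha : a ∈ Icc α₁ α₂)
    (hs : s ∈ Icc α₁ α₂) :
    youngGap φ ψ α₁ β₁ a (φ s) = (∫ x in s..a, φ x) - (a - s) * φ s := by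
  have hα₁ : α₁ ∈ Icc α₁ α₂ := ⟨le_rfl, ha.1.trans ha.2⟩
  have hs₀ := youngGap_graph_eq_zero hφ hψ hmaps hinv hφα₁ hs
  unfold youngGap at hs₀ ⊢
  rw [← integral_interval_sub_left (hφ.mono (uIcc_subset_Icc hα₁ ha)).intervalIntegrable
    (hφ.mono (uIcc_subset_Icc hα₁ hs)).intervalIntegrable]
  linarith

end YoungGap

theorem young_equality_iff_general
    (α₁ α₂ β₁ β₂ : ℝ) (φ ψ : ℝ → ℝ)
    (hmono : StrictMonoOn φ (Icc α₁ α₂))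
    (hbij : BijOn φ (Icc α₁ α₂) (Icc β₁ β₂))
    (hinvL : ∀ x ∈ Icc α₁ α₂, ψ (φ x) = x)
    (hinvR : ∀ y ∈ Icc β₁ β₂, φ (ψ y) = y)
    (hψmaps : MapsTo ψ (Icc β₁ β₂) (Icc α₁ α₂))
    (a b : ℝ) (ha : a ∈ Icc α₁ α₂) (hb : b ∈ Icc β₁ β₂) :
    (∫ x in α₁..a, φ x) + (∫ x in β₁..b, ψ x) - a * b + α₁ * β₁ = 0 ↔
    (∫ x in α₁..a, φ x) + (∫ x in β₁..b, ψ x) - a * b + α₁ * β₁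
      = -(ψ b - a) * (φ a - b) := by
  have hψ : MonotoneOn ψ (Icc β₁ β₂) :=
    Function.monotoneOn_of_rightInvOn_of_mapsTo hmono.monotoneOn (fun y hy => hinvR y hy) hψmaps
  have hφα₁ : φ α₁ = β₁ := by
    have hα₁ : α₁ ∈ Icc α₁ α₂ := ⟨le_rfl, ha.1.trans ha.2⟩
    have hβ₁ : β₁ ∈ Icc β₁ β₂ := ⟨le_rfl, hb.1.trans hb.2⟩
    refine le_antisymm ?_ (hbij.mapsTo hα₁).1
    simpa only [hinvR β₁ hβ₁] using hmono.monotoneOn hα₁ (hψmaps hβ₁) (hψmaps hβ₁).1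
  have hs := hψmaps hb
  have hF : youngGap φ ψ α₁ β₁ a b = (∫ x in ψ b..a, φ x) - (a - ψ b) * b := by
    simpa only [hinvR b hb] using youngGap_graph_eq hmono.monotoneOn hψ hbij.mapsTo
      (fun x hx => hinvL x hx) hφα₁ ha hs
  change youngGap φ ψ α₁ β₁ a b = 0 ↔ youngGap φ ψ α₁ β₁ a b = _
  rcases eq_or_ne (ψ b) a with hsa | hsa
  · simp [hF, hsa]
  · obtain ⟨hpos, hlt⟩ := (hmono.mono (uIcc_subset_Icc hs ha)).integral_sub_mul_mem_Ioo hsa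
    rw [hinvR b hb, ← hF] at hpos hlt
    exact iff_of_false hpos.ne' (by intro h; linarith)

theorem young_equality_iff
    (α₁ α₂ β₁ β₂ : ℝ) (φ ψ : ℝ → ℝ)
    (hα : α₁ < α₂) (hβ : β₁ < β₂)
    (hcont : ContinuousOn φ (Icc α₁ α₂))
    (hmono : StrictMonoOn φ (Icc α₁ α₂))
    (hbij : BijOn φ (Icc α₁ α₂) (Icc β₁ β₂))
    (hinvL : ∀ x ∈ Icc α₁ α₂, ψ (φ x) = x)
    (hinvR : ∀ y ∈ Icc β₁ β₂, φ (ψ y) = y)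
    (hψmaps : MapsTo ψ (Icc β₁ β₂) (Icc α₁ α₂))
    (a b : ℝ) (ha : a ∈ Icc α₁ α₂) (hb : b ∈ Icc β₁ β₂) :
    (∫ x in α₁..a, φ x) + (∫ x in β₁..b, ψ x) - a * b + α₁ * β₁ = 0 ↔
    (∫ x in α₁..a, φ x) + (∫ x in β₁..b, ψ x) - a * b + α₁ * β₁
      = -(ψ b - a) * (φ a - b) :=
  young_equality_iff_general α₁ α₂ β₁ β₂ φ ψ hmono hbij hinvL hinvR hψmaps a b ha hb
end

section
/- Let φ : [α₁,α₂] → [β₁,β₂] be a continuous strictly increasing bijection with inverse ψ : [β₁,β₂] → [α₁,α₂], and define F(a,b) = ∫_{α₁}^{a} φ(x) dx + ∫_{β₁}^{b} ψ(x) dx − a·b + α₁·β₁. Then for every a, ã ∈ [α₁,α₂] and b, b̃ ∈ [β₁,β₂] one has F(a,b) + F(ã,b̃) ≥ −(ã − a)·(b̃ − b). -/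
open Set intervalIntegral

theorem young_nonneg_aux
    (α₁ α₂ β₁ β₂ : ℝ) (φ ψ : ℝ → ℝ)
    (hα : α₁ < α₂) (hβ : β₁ < β₂)
    (hcont : ContinuousOn φ (Icc α₁ α₂))
    (hmono : StrictMonoOn φ (Icc α₁ α₂))
    (hbij : BijOn φ (Icc α₁ α₂) (Icc β₁ β₂))
    (hinvL : ∀ x ∈ Icc α₁ α₂, ψ (φ x) = x)
    (hinvR : ∀ y ∈ Icc β₁ β₂, φ (ψ y) = y)
    (hψmaps : MapsTo ψ (Icc β₁ β₂) (Icc α₁ α₂))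
    (a b : ℝ) (ha : a ∈ Icc α₁ α₂) (hb : b ∈ Icc β₁ β₂) :
    0 ≤ (∫ x in α₁..a, φ x) + (∫ x in β₁..b, ψ x) - a * b + α₁ * β₁ := by
  have hφmaps : MapsTo φ (Icc α₁ α₂) (Icc β₁ β₂) := hbij.mapsTo
  have hψmono : MonotoneOn ψ (Icc β₁ β₂) := by
    intro s hs t ht hst
    by_contra h
    push_neg at h
    have := hmono (hψmaps ht) (hψmaps hs) h
    rw [hinvR t ht, hinvR s hs] at this
    linarith
  have hφα₁ : φ α₁ = β₁ := by
    obtain ⟨c, hc, hφc⟩ := hbij.surjOn (left_mem_Icc.2 hβ.le)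
    have h1 : φ α₁ ≤ φ c := hmono.monotoneOn (left_mem_Icc.2 hα.le) hc hc.1
    have h2 : β₁ ≤ φ α₁ := (hφmaps (left_mem_Icc.2 hα.le)).1
    rw [hφc] at h1
    linarith
  have hφint : ∀ x ∈ Icc α₁ α₂, ∀ y ∈ Icc α₁ α₂,
      IntervalIntegrable φ MeasureTheory.volume x y := fun x hx y hy =>
    (hcont.mono (uIcc_subset_Icc hx hy)).intervalIntegrable
  have hψint : ∀ x ∈ Icc β₁ β₂, ∀ y ∈ Icc β₁ β₂,
      IntervalIntegrable ψ MeasureTheory.volume x y := fun x hx y hy =>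
    (hψmono.mono (uIcc_subset_Icc hx hy)).intervalIntegrable
  set K : ℝ → ℝ := fun t => (∫ x in α₁..t, φ x) + (∫ x in β₁..(φ t), ψ x) - t * φ t with hK
  have hα₁mem : α₁ ∈ Icc α₁ α₂ := left_mem_Icc.2 hα.le
  -- key estimate
  have key : ∀ x ∈ Icc α₁ α₂, ∀ y ∈ Icc α₁ α₂, x ≤ y →
      |K y - K x| ≤ (y - x) * (φ y - φ x) := by
    intro x hx y hy hxy
    have hφxy : φ x ≤ φ y := hmono.monotoneOn hx hy hxy
    have hmemx : φ x ∈ Icc β₁ β₂ := hφmaps hx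
    have hmemy : φ y ∈ Icc β₁ β₂ := hφmaps hy
    have hsub : Icc x y ⊆ Icc α₁ α₂ := Icc_subset_Icc hx.1 hy.2
    have hsub' : Icc (φ x) (φ y) ⊆ Icc β₁ β₂ := Icc_subset_Icc hmemx.1 hmemy.2
    have hintxy : IntervalIntegrable φ MeasureTheory.volume x y := hφint x hx y hy
    have hintψ : IntervalIntegrable ψ MeasureTheory.volume (φ x) (φ y) :=
      hψint _ hmemx _ hmemy
    have h1 : (y - x) * φ x ≤ ∫ t in x..y, φ t := by
      have := intervalIntegral.integral_mono_on hxy intervalIntegrable_const hintxy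
        (fun t ht => hmono.monotoneOn hx (hsub ht) ht.1)
      simpa using this
    have h2 : (∫ t in x..y, φ t) ≤ (y - x) * φ y := by
      have := intervalIntegral.integral_mono_on hxy hintxy intervalIntegrable_const
        (fun t ht => hmono.monotoneOn (hsub ht) hy ht.2)
      simpa using this
    have h3 : (φ y - φ x) * x ≤ ∫ s in (φ x)..(φ y), ψ s := by
      have := intervalIntegral.integral_mono_on hφxy intervalIntegrable_const hintψ
        (fun s hs => by
          have : ψ (φ x) ≤ ψ s := hψmono hmemx (hsub' hs) hs.1
          rwa [hinvL x hx] at this)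
      simpa using this
    have h4 : (∫ s in (φ x)..(φ y), ψ s) ≤ (φ y - φ x) * y := by
      have := intervalIntegral.integral_mono_on hφxy hintψ intervalIntegrable_const
        (fun s hs => by
          have : ψ s ≤ ψ (φ y) := hψmono (hsub' hs) hmemy hs.2
          rwa [hinvL y hy] at this)
      simpa using this
    have hsplit1 : (∫ t in α₁..x, φ t) + (∫ t in x..y, φ t) = ∫ t in α₁..y, φ t :=
      intervalIntegral.integral_add_adjacent_intervals (hφint α₁ hα₁mem x hx) hintxy
    have hsplit2 : (∫ s in β₁..(φ x), ψ s) + (∫ s in (φ x)..(φ y), ψ s)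
        = ∫ s in β₁..(φ y), ψ s :=
      intervalIntegral.integral_add_adjacent_intervals
        (hψint β₁ (left_mem_Icc.2 hβ.le) _ hmemx) hintψ
    have hKdiff : K y - K x = (∫ t in x..y, φ t) + (∫ s in (φ x)..(φ y), ψ s)
        - y * φ y + x * φ x := by
      simp only [hK]
      linarith [hsplit1, hsplit2]
    rw [abs_le]
    constructor <;> nlinarith
  -- Lipschitz, hence continuous
  have hKcont : ContinuousOn K (Icc α₁ α₂) := by
    have : LipschitzOnWith (Real.toNNReal (β₂ - β₁)) K (Icc α₁ α₂) := by
      apply LipschitzOnWith.of_dist_le_mul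
      intro x hx y hy
      rcases le_total y x with h | h
      · have := key y hy x hx h
        have hb1 : φ x - φ y ≤ β₂ - β₁ := by
          have h1 := hφmaps hx; have h2 := hφmaps hy
          simp only [mem_Icc] at h1 h2; linarith
        rw [Real.dist_eq, Real.dist_eq]
        calc |K x - K y| ≤ (x - y) * (φ x - φ y) := this
          _ ≤ (x - y) * (β₂ - β₁) := by nlinarith
          _ ≤ (β₂ - β₁) * |x - y| := by
              rw [abs_of_nonneg (by linarith)]; nlinarith
          _ = Real.toNNReal (β₂ - β₁) * |x - y| := by
              rw [Real.coe_toNNReal _ (by linarith)]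
      · have := key x hx y hy h
        have hb1 : φ y - φ x ≤ β₂ - β₁ := by
          have h1 := hφmaps hx; have h2 := hφmaps hy
          simp only [mem_Icc] at h1 h2; linarith
        rw [Real.dist_eq, Real.dist_eq, abs_sub_comm]
        calc |K y - K x| ≤ (y - x) * (φ y - φ x) := this
          _ ≤ (y - x) * (β₂ - β₁) := by nlinarith
          _ ≤ (β₂ - β₁) * |x - y| := by
              rw [abs_sub_comm, abs_of_nonneg (by linarith)]; nlinarith
          _ = Real.toNNReal (β₂ - β₁) * |x - y| := by
              rw [Real.coe_toNNReal _ (by linarith)]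
    exact this.continuousOn
  -- right derivative zero
  have hderiv : ∀ x ∈ Ico α₁ α₂, HasDerivWithinAt K 0 (Ici x) x := by
    intro x hx
    have hx' : x ∈ Icc α₁ α₂ := ⟨hx.1, hx.2.le⟩
    have hsub : Icc x α₂ ⊆ Icc α₁ α₂ := Icc_subset_Icc hx.1 le_rfl
    have hIcc : HasDerivWithinAt K 0 (Icc x α₂) x := by
      rw [hasDerivWithinAt_iff_isLittleO]
      rw [Asymptotics.isLittleO_iff]
      intro c hc
      have htend : Filter.Tendsto φ (nhdsWithin x (Icc x α₂)) (nhds (φ x)) :=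
        (hcont x hx').mono_left (nhdsWithin_mono x hsub)
      have hev : ∀ᶠ y in nhdsWithin x (Icc x α₂), φ y - φ x ≤ c := by
        have := htend (Metric.ball_mem_nhds (φ x) hc)
        filter_upwards [this] with y hy
        rw [mem_preimage, Metric.mem_ball, Real.dist_eq, abs_lt] at hy
        linarith [hy.2]
      filter_upwards [hev, self_mem_nhdsWithin] with y hy hymem
      have hy' : y ∈ Icc α₁ α₂ := hsub hymem
      have hxy : x ≤ y := hymem.1
      have hkey := key x hx' y hy' hxy
      have hφxy : φ x ≤ φ y := hmono.monotoneOn hx' hy' hxy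
      simp only [smul_zero, sub_zero, Real.norm_eq_abs]
      calc |K y - K x| ≤ (y - x) * (φ y - φ x) := hkey
        _ ≤ (y - x) * c := by nlinarith
        _ ≤ c * |y - x| := by rw [abs_of_nonneg (by linarith)]; nlinarith
    apply hIcc.mono_of_mem_nhdsWithin
    rw [show Icc x α₂ = Ici x ∩ Iic α₂ from by ext z; simp [mem_Icc, and_comm]]
    exact inter_mem_nhdsWithin _ (Iic_mem_nhds hx.2)
  -- Young equality
  have heq : ∀ t ∈ Icc α₁ α₂, K t = K α₁ :=
    constant_of_has_deriv_right_zero hKcont hderiv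
  have hKα₁ : K α₁ = -(α₁ * β₁) := by
    simp only [hK, hφα₁, intervalIntegral.integral_same]
    ring
  -- Young inequality
  set t := ψ b with htdef
  have ht : t ∈ Icc α₁ α₂ := hψmaps hb
  have hφt : φ t = b := hinvR b hb
  have heqt : (∫ x in α₁..t, φ x) + (∫ x in β₁..b, ψ x) - t * b = -(α₁ * β₁) := by
    have := heq t ht
    rw [hKα₁] at this
    simp only [hK, hφt] at this
    linarith
  have hta : (a - t) * b ≤ ∫ s in t..a, φ s := by
    rcases le_total t a with h | h
    · have hint : IntervalIntegrable φ MeasureTheory.volume t a := hφint t ht a ha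
      have := intervalIntegral.integral_mono_on h intervalIntegrable_const hint
        (fun s hs => by
          have : φ t ≤ φ s := hmono.monotoneOn ht (Icc_subset_Icc ht.1 ha.2 hs) hs.1
          rwa [hφt] at this)
      simpa using this
    · have hint : IntervalIntegrable φ MeasureTheory.volume a t := hφint a ha t ht
      have hle := intervalIntegral.integral_mono_on h hint intervalIntegrable_const
        (fun s hs => by
          have : φ s ≤ φ t := hmono.monotoneOn (Icc_subset_Icc ha.1 ht.2 hs) ht hs.2
          rwa [hφt] at this)
      simp only [intervalIntegral.integral_const, smul_eq_mul] at hle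
      rw [intervalIntegral.integral_symm]
      linarith
  have hsplit : (∫ x in α₁..t, φ x) + (∫ s in t..a, φ s) = ∫ x in α₁..a, φ x :=
    intervalIntegral.integral_add_adjacent_intervals (hφint α₁ hα₁mem t ht)
      (hφint t ht a ha)
  linarith

theorem young_two_point_lower_bound
    (α₁ α₂ β₁ β₂ : ℝ) (φ ψ : ℝ → ℝ)
    (hα : α₁ < α₂) (hβ : β₁ < β₂)
    (hcont : ContinuousOn φ (Icc α₁ α₂))
    (hmono : StrictMonoOn φ (Icc α₁ α₂))
    (hbij : BijOn φ (Icc α₁ α₂) (Icc β₁ β₂))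
    (hinvL : ∀ x ∈ Icc α₁ α₂, ψ (φ x) = x)
    (hinvR : ∀ y ∈ Icc β₁ β₂, φ (ψ y) = y)
    (hψmaps : MapsTo ψ (Icc β₁ β₂) (Icc α₁ α₂))
    (a aa b bb : ℝ) (ha : a ∈ Icc α₁ α₂) (haa : aa ∈ Icc α₁ α₂)
    (hb : b ∈ Icc β₁ β₂) (hbb : bb ∈ Icc β₁ β₂) :
    ((∫ x in α₁..a, φ x) + (∫ x in β₁..b, ψ x) - a * b + α₁ * β₁) +
    ((∫ x in α₁..aa, φ x) + (∫ x in β₁..bb, ψ x) - aa * bb + α₁ * β₁)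
      ≥ -(aa - a) * (bb - b) := by
  have h1 := young_nonneg_aux α₁ α₂ β₁ β₂ φ ψ hα hβ hcont hmono hbij hinvL hinvR hψmaps
    a bb ha hbb
  have h2 := young_nonneg_aux α₁ α₂ β₁ β₂ φ ψ hα hβ hcont hmono hbij hinvL hinvR hψmaps
    aa b haa hb
  nlinarith [h1, h2]
end

section
/- Let φ : [α₁,α₂] → [β₁,β₂] be a continuous strictly increasing bijection with inverse ψ : [β₁,β₂] → [α₁,α₂], and define F(a,b) = ∫_{α₁}^{a} φ(x) dx + ∫_{β₁}^{b} ψ(x) dx − a·b + α₁·β₁. Then for every a, ã ∈ [α₁,α₂] and b, b̃ ∈ [β₁,β₂], the equality F(a,b) + F(ã,b̃) = −(ã − a)·(b̃ − b) holds if and only if ã = ψ(b) and b̃ = φ(a). -/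
open Set intervalIntegral

section YoungAux

variable {α₁ α₂ β₁ β₂ : ℝ} {φ ψ : ℝ → ℝ}

lemma young_psi_strictMono
    (hmono : StrictMonoOn φ (Icc α₁ α₂))
    (hinvR : ∀ y ∈ Icc β₁ β₂, φ (ψ y) = y)
    (hψmaps : MapsTo ψ (Icc β₁ β₂) (Icc α₁ α₂)) :
    StrictMonoOn ψ (Icc β₁ β₂) := by
  intro y1 h1 y2 h2 h12
  by_contra h
  push_neg at h
  have h' := hmono.monotoneOn (hψmaps h2) (hψmaps h1) h
  rw [hinvR _ h1, hinvR _ h2] at h'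
  exact absurd h' (not_le.mpr h12)

lemma young_phi_left (hα : α₁ ≤ α₂) (hβ : β₁ ≤ β₂)
    (hmono : StrictMonoOn φ (Icc α₁ α₂))
    (hφmaps : MapsTo φ (Icc α₁ α₂) (Icc β₁ β₂))
    (hinvR : ∀ y ∈ Icc β₁ β₂, φ (ψ y) = y)
    (hψmaps : MapsTo ψ (Icc β₁ β₂) (Icc α₁ α₂)) :
    φ α₁ = β₁ := by
  have hβ₁ : β₁ ∈ Icc β₁ β₂ := ⟨le_refl _, hβ⟩
  have h1 : φ α₁ ≤ φ (ψ β₁) :=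
    hmono.monotoneOn (left_mem_Icc.mpr hα) (hψmaps hβ₁) (hψmaps hβ₁).1
  rw [hinvR _ hβ₁] at h1
  exact le_antisymm h1 (hφmaps (left_mem_Icc.mpr hα)).1

lemma young_K_bound
    (hcont : ContinuousOn φ (Icc α₁ α₂))
    (hmono : StrictMonoOn φ (Icc α₁ α₂))
    (hφmaps : MapsTo φ (Icc α₁ α₂) (Icc β₁ β₂))
    (hinvL : ∀ x ∈ Icc α₁ α₂, ψ (φ x) = x)
    (hψmono : MonotoneOn ψ (Icc β₁ β₂))
    {x y : ℝ} (hx : x ∈ Icc α₁ α₂) (hy : y ∈ Icc α₁ α₂) (hxy : x ≤ y) :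
    |((∫ t in α₁..y, φ t) + (∫ t in β₁..φ y, ψ t) - y * φ y + α₁ * β₁)
      - ((∫ t in α₁..x, φ t) + (∫ t in β₁..φ x, ψ t) - x * φ x + α₁ * β₁)|
      ≤ (y - x) * (φ y - φ x) := by
  have hsub : Icc x y ⊆ Icc α₁ α₂ := Icc_subset_Icc hx.1 hy.2
  have hφxy : φ x ≤ φ y := hmono.monotoneOn hx hy hxy
  have hφx := hφmaps hx
  have hφy := hφmaps hy
  have hsubβ : Icc (φ x) (φ y) ⊆ Icc β₁ β₂ := Icc_subset_Icc hφx.1 hφy.2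
  -- integrability
  have intφxy : IntervalIntegrable φ MeasureTheory.volume x y := by
    apply (hcont.mono ?_).intervalIntegrable
    rw [uIcc_of_le hxy]; exact hsub
  have intφa : ∀ z ∈ Icc α₁ α₂, IntervalIntegrable φ MeasureTheory.volume α₁ z := by
    intro z hz
    apply (hcont.mono ?_).intervalIntegrable
    rw [uIcc_of_le hz.1]; exact Icc_subset_Icc le_rfl hz.2
  have intψxy : IntervalIntegrable ψ MeasureTheory.volume (φ x) (φ y) := by
    apply (hψmono.mono ?_).intervalIntegrable
    rw [uIcc_of_le hφxy]; exact hsubβ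
  have intψb : ∀ z ∈ Icc β₁ β₂, IntervalIntegrable ψ MeasureTheory.volume β₁ z := by
    intro z hz
    apply (hψmono.mono ?_).intervalIntegrable
    rw [uIcc_of_le hz.1]; exact Icc_subset_Icc le_rfl hz.2
  have split1 : (∫ t in α₁..y, φ t) - (∫ t in α₁..x, φ t) = ∫ t in x..y, φ t :=
    integral_interval_sub_left (intφa y hy) (intφa x hx)
  have split2 : (∫ t in β₁..φ y, ψ t) - (∫ t in β₁..φ x, ψ t) = ∫ t in φ x..φ y, ψ t :=
    integral_interval_sub_left (intψb _ hφy) (intψb _ hφx)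
  -- bounds for ∫ φ
  have hA1 : (y - x) * φ x ≤ ∫ t in x..y, φ t := by
    have := integral_mono_on hxy intervalIntegrable_const intφxy
      (fun t ht => hmono.monotoneOn hx (hsub ht) ht.1)
    simpa using this
  have hA2 : (∫ t in x..y, φ t) ≤ (y - x) * φ y := by
    have := integral_mono_on hxy intφxy intervalIntegrable_const
      (fun t ht => hmono.monotoneOn (hsub ht) hy ht.2)
    simpa using this
  -- bounds for ∫ ψ
  have hB1 : (φ y - φ x) * x ≤ ∫ t in φ x..φ y, ψ t := by
    have := integral_mono_on hφxy intervalIntegrable_const intψxy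
      (fun t ht => by
        have h1 : ψ (φ x) ≤ ψ t := hψmono hφx (hsubβ ht) ht.1
        rwa [hinvL x hx] at h1)
    simpa [mul_comm] using this
  have hB2 : (∫ t in φ x..φ y, ψ t) ≤ (φ y - φ x) * y := by
    have := integral_mono_on hφxy intψxy intervalIntegrable_const
      (fun t ht => by
        have h1 : ψ t ≤ ψ (φ y) := hψmono (hsubβ ht) hφy ht.2
        rwa [hinvL y hy] at h1)
    simpa [mul_comm] using this
  rw [abs_le]
  constructor <;> nlinarith [split1, split2, hA1, hA2, hB1, hB2]

lemma young_K_zero (hα : α₁ < α₂) (hβ : β₁ < β₂)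
    (hcont : ContinuousOn φ (Icc α₁ α₂))
    (hmono : StrictMonoOn φ (Icc α₁ α₂))
    (hφmaps : MapsTo φ (Icc α₁ α₂) (Icc β₁ β₂))
    (hinvL : ∀ x ∈ Icc α₁ α₂, ψ (φ x) = x)
    (hinvR : ∀ y ∈ Icc β₁ β₂, φ (ψ y) = y)
    (hψmaps : MapsTo ψ (Icc β₁ β₂) (Icc α₁ α₂)) :
    ∀ a ∈ Icc α₁ α₂,
      (∫ x in α₁..a, φ x) + (∫ x in β₁..φ a, ψ x) - a * φ a + α₁ * β₁ = 0 := by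
  have hψmono : MonotoneOn ψ (Icc β₁ β₂) :=
    (young_psi_strictMono hmono hinvR hψmaps).monotoneOn
  set K : ℝ → ℝ :=
    fun a => (∫ x in α₁..a, φ x) + (∫ x in β₁..φ a, ψ x) - a * φ a + α₁ * β₁ with hK
  have hbound : ∀ x ∈ Icc α₁ α₂, ∀ y ∈ Icc α₁ α₂,
      |K y - K x| ≤ |y - x| * |φ y - φ x| := by
    intro x hx y hy
    rcases le_total x y with h | h
    · have := young_K_bound hcont hmono hφmaps hinvL hψmono hx hy h
      calc |K y - K x| ≤ (y - x) * (φ y - φ x) := this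
        _ = |y - x| * |φ y - φ x| := by
            rw [abs_of_nonneg (sub_nonneg.mpr h),
              abs_of_nonneg (sub_nonneg.mpr (hmono.monotoneOn hx hy h))]
    · have := young_K_bound hcont hmono hφmaps hinvL hψmono hy hx h
      calc |K y - K x| = |K x - K y| := abs_sub_comm _ _
        _ ≤ (x - y) * (φ x - φ y) := this
        _ = |y - x| * |φ y - φ x| := by
            rw [abs_sub_comm y x, abs_sub_comm (φ y) (φ x),
              abs_of_nonneg (sub_nonneg.mpr h),
              abs_of_nonneg (sub_nonneg.mpr (hmono.monotoneOn hy hx h))]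
  have hderiv : ∀ x ∈ Icc α₁ α₂, HasDerivWithinAt K 0 (Icc α₁ α₂) x := by
    intro x hx
    rw [hasDerivWithinAt_iff_isLittleO]
    simp only [smul_zero, sub_zero]
    rw [Asymptotics.isLittleO_iff]
    intro c hc
    have hφc : ∀ᶠ y in nhdsWithin x (Icc α₁ α₂), |φ y - φ x| ≤ c := by
      have ht := (hcont x hx).tendsto
      have := Metric.tendsto_nhds.mp ht c hc
      filter_upwards [this] with y hy
      rw [Real.dist_eq] at hy
      exact hy.le
    filter_upwards [hφc, self_mem_nhdsWithin] with y hy hymem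
    calc ‖K y - K x‖ ≤ |y - x| * |φ y - φ x| := hbound x hx y hymem
      _ ≤ |y - x| * c := mul_le_mul_of_nonneg_left hy (abs_nonneg _)
      _ = c * ‖y - x‖ := by rw [Real.norm_eq_abs]; ring
  have hKcont : ContinuousOn K (Icc α₁ α₂) :=
    fun x hx => (hderiv x hx).continuousWithinAt
  have hIci : ∀ x ∈ Ico α₁ α₂, HasDerivWithinAt K 0 (Ici x) x := by
    intro x hx
    refine (hderiv x ⟨hx.1, hx.2.le⟩).mono_of_mem_nhdsWithin ?_
    rw [mem_nhdsWithin]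
    exact ⟨Iio α₂, isOpen_Iio, hx.2,
      fun y hy => ⟨le_trans hx.1 hy.2, hy.1.le⟩⟩
  intro a ha
  have h0 : K a = K α₁ := constant_of_has_deriv_right_zero hKcont hIci a ha
  have hφα₁ : φ α₁ = β₁ := young_phi_left hα.le hβ.le hmono hφmaps hinvR hψmaps
  have : K α₁ = 0 := by
    simp only [hK, hφα₁, intervalIntegral.integral_same]
    ring
  exact h0.trans this

lemma young_F_key (hα : α₁ < α₂) (hβ : β₁ < β₂)
    (hcont : ContinuousOn φ (Icc α₁ α₂))
    (hmono : StrictMonoOn φ (Icc α₁ α₂))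
    (hφmaps : MapsTo φ (Icc α₁ α₂) (Icc β₁ β₂))
    (hinvL : ∀ x ∈ Icc α₁ α₂, ψ (φ x) = x)
    (hinvR : ∀ y ∈ Icc β₁ β₂, φ (ψ y) = y)
    (hψmaps : MapsTo ψ (Icc β₁ β₂) (Icc α₁ α₂))
    {a b : ℝ} (ha : a ∈ Icc α₁ α₂) (hb : b ∈ Icc β₁ β₂) :
    0 ≤ (∫ x in α₁..a, φ x) + (∫ x in β₁..b, ψ x) - a * b + α₁ * β₁ ∧
    ((∫ x in α₁..a, φ x) + (∫ x in β₁..b, ψ x) - a * b + α₁ * β₁ = 0 ↔ b = φ a) := by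
  have hψsm := young_psi_strictMono hmono hinvR hψmaps
  have hψmono := hψsm.monotoneOn
  have hφa := hφmaps ha
  have intψ : ∀ z w : ℝ, z ∈ Icc β₁ β₂ → w ∈ Icc β₁ β₂ →
      IntervalIntegrable ψ MeasureTheory.volume z w := by
    intro z w hz hw
    apply (hψmono.mono ?_).intervalIntegrable
    exact uIcc_subset_Icc hz hw
  have hK := young_K_zero hα hβ hcont hmono hφmaps hinvL hinvR hψmaps a ha
  have hsplit : (∫ x in β₁..b, ψ x)
      = (∫ x in β₁..φ a, ψ x) + ∫ x in φ a..b, ψ x :=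
    (integral_add_adjacent_intervals (intψ _ _ (left_mem_Icc.mpr hβ.le) hφa)
      (intψ _ _ hφa hb)).symm
  have hFeq : (∫ x in α₁..a, φ x) + (∫ x in β₁..b, ψ x) - a * b + α₁ * β₁
      = ∫ y in φ a..b, (ψ y - a) := by
    rw [intervalIntegral.integral_sub (intψ _ _ hφa hb) intervalIntegrable_const,
      intervalIntegral.integral_const, smul_eq_mul, hsplit]
    linear_combination hK
  rw [hFeq]
  rcases lt_trichotomy b (φ a) with hlt | heq | hgt
  · have hpos : 0 < ∫ y in b..φ a, (a - ψ y) := by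
      apply intervalIntegral_pos_of_pos_on
      · exact intervalIntegrable_const.sub (intψ _ _ hb hφa)
      · intro y hy
        have hyβ : y ∈ Icc β₁ β₂ := ⟨le_trans hb.1 hy.1.le, le_trans hy.2.le hφa.2⟩
        have : ψ y < ψ (φ a) := hψsm hyβ hφa hy.2
        rw [hinvL a ha] at this
        linarith
      · exact hlt
    have : (∫ y in φ a..b, (ψ y - a)) = ∫ y in b..φ a, (a - ψ y) := by
      rw [intervalIntegral.integral_symm]
      rw [← intervalIntegral.integral_neg]
      congr 1
      ext y
      ring
    rw [this]
    refine ⟨hpos.le, ?_, ?_⟩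
    · intro h; linarith
    · intro h; exact absurd h hlt.ne
  · rw [heq, intervalIntegral.integral_same]
    exact ⟨le_refl _, fun _ => rfl, fun _ => rfl⟩
  · have hpos : 0 < ∫ y in φ a..b, (ψ y - a) := by
      apply intervalIntegral_pos_of_pos_on
      · exact (intψ _ _ hφa hb).sub intervalIntegrable_const
      · intro y hy
        have hyβ : y ∈ Icc β₁ β₂ := ⟨le_trans hφa.1 hy.1.le, le_trans hy.2.le hb.2⟩
        have : ψ (φ a) < ψ y := hψsm hφa hyβ hy.1
        rw [hinvL a ha] at this
        linarith
      · exact hgt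
    refine ⟨hpos.le, ?_, ?_⟩
    · intro h; linarith
    · intro h; exact absurd h hgt.ne'

end YoungAux

theorem young_two_point_equality_iff
    (α₁ α₂ β₁ β₂ : ℝ) (φ ψ : ℝ → ℝ)
    (hα : α₁ < α₂) (hβ : β₁ < β₂)
    (hcont : ContinuousOn φ (Icc α₁ α₂))
    (hmono : StrictMonoOn φ (Icc α₁ α₂))
    (hbij : BijOn φ (Icc α₁ α₂) (Icc β₁ β₂))
    (hinvL : ∀ x ∈ Icc α₁ α₂, ψ (φ x) = x)
    (hinvR : ∀ y ∈ Icc β₁ β₂, φ (ψ y) = y)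
    (hψmaps : MapsTo ψ (Icc β₁ β₂) (Icc α₁ α₂))
    (a aa b bb : ℝ) (ha : a ∈ Icc α₁ α₂) (haa : aa ∈ Icc α₁ α₂)
    (hb : b ∈ Icc β₁ β₂) (hbb : bb ∈ Icc β₁ β₂) :
    ((∫ x in α₁..a, φ x) + (∫ x in β₁..b, ψ x) - a * b + α₁ * β₁) +
    ((∫ x in α₁..aa, φ x) + (∫ x in β₁..bb, ψ x) - aa * bb + α₁ * β₁)
      = -(aa - a) * (bb - b) ↔ aa = ψ b ∧ bb = φ a := by
  have hφmaps := hbij.mapsTo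
  obtain ⟨h1n, h1e⟩ := young_F_key hα hβ hcont hmono hφmaps hinvL hinvR hψmaps ha hbb
  obtain ⟨h2n, h2e⟩ := young_F_key hα hβ hcont hmono hφmaps hinvL hinvR hψmaps haa hb
  constructor
  · intro h
    have key : ((∫ x in α₁..a, φ x) + (∫ x in β₁..bb, ψ x) - a * bb + α₁ * β₁) +
        ((∫ x in α₁..aa, φ x) + (∫ x in β₁..b, ψ x) - aa * b + α₁ * β₁) = 0 := by
      linear_combination h
    have hbb' : bb = φ a := h1e.mp (le_antisymm (by linarith) h1n)
    have hb' : b = φ aa := h2e.mp (le_antisymm (by linarith) h2n)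
    exact ⟨by rw [hb', hinvL aa haa], hbb'⟩
  · rintro ⟨h1, h2⟩
    have hb' : b = φ aa := by rw [h1, hinvR b hb]
    have e1 := h1e.mpr h2
    have e2 := h2e.mpr hb'
    linear_combination e1 + e2
end

section
/- Let φ : [0,α₂] → [0,β₂] be a continuous strictly increasing bijection with φ(0) = 0 and inverse ψ : [0,β₂] → [0,α₂], and define F(a,b) = ∫_{0}^{a} φ(x) dx + ∫_{0}^{b} ψ(x) dx − a·b. Then for every a ∈ [0,α₂] and b ∈ [0,β₂] one has F(a,b) ≤ max{a·φ(a), b·ψ(b)} − a·b (Merkle's inequality). -/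
open Set intervalIntegral

theorem merkle_inequality
    (α₂ β₂ : ℝ) (φ ψ : ℝ → ℝ)
    (hα : 0 < α₂) (hβ : 0 < β₂)
    (hcont : ContinuousOn φ (Icc 0 α₂))
    (hmono : StrictMonoOn φ (Icc 0 α₂))
    (hbij : BijOn φ (Icc 0 α₂) (Icc 0 β₂))
    (hφ0 : φ 0 = 0)
    (hinvL : ∀ x ∈ Icc 0 α₂, ψ (φ x) = x)
    (hinvR : ∀ y ∈ Icc 0 β₂, φ (ψ y) = y)
    (hψmaps : MapsTo ψ (Icc 0 β₂) (Icc 0 α₂))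
    (a b : ℝ) (ha : a ∈ Icc 0 α₂) (hb : b ∈ Icc 0 β₂) :
    (∫ x in (0:ℝ)..a, φ x) + (∫ x in (0:ℝ)..b, ψ x) - a * b
      ≤ max (a * φ a) (b * ψ b) - a * b := by
  have hφmono : MonotoneOn φ (Icc 0 α₂) := hmono.monotoneOn
  have h0mem : (0:ℝ) ∈ Icc (0:ℝ) α₂ := left_mem_Icc.2 hα.le
  have hψmono : MonotoneOn ψ (Icc 0 β₂) := by
    intro y1 h1 y2 h2 h12
    by_contra h
    push_neg at h
    have := hmono (hψmaps h2) (hψmaps h1) h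
    rw [hinvR _ h2, hinvR _ h1] at this
    linarith
  have hφnonneg : ∀ x ∈ Icc 0 α₂, 0 ≤ φ x := by
    intro x hx
    rw [← hφ0]
    exact hφmono h0mem hx hx.1
  -- integrability
  have hφint : ∀ s t, s ∈ Icc 0 α₂ → t ∈ Icc 0 α₂ →
      IntervalIntegrable φ MeasureTheory.volume s t := fun s t hs ht =>
    (hcont.mono (uIcc_subset_Icc hs ht)).intervalIntegrable
  have hψint : ∀ s t, s ∈ Icc 0 β₂ → t ∈ Icc 0 β₂ →
      IntervalIntegrable ψ MeasureTheory.volume s t := fun s t hs ht =>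
    (hψmono.mono (uIcc_subset_Icc hs ht)).intervalIntegrable
  set H : ℝ → ℝ := fun t =>
    (∫ x in (0:ℝ)..t, φ x) + (∫ x in (0:ℝ)..φ t, ψ x) - t * φ t with hHdef
  have hH0 : H 0 = 0 := by simp [hHdef, hφ0]
  have hstep : ∀ s t, s ∈ Icc 0 α₂ → t ∈ Icc 0 α₂ → s ≤ t →
      |H t - H s| ≤ (t - s) * (φ t - φ s) := by
    intro s t hs ht hst
    have hfs : φ s ∈ Icc 0 β₂ := hbij.mapsTo hs
    have hft : φ t ∈ Icc 0 β₂ := hbij.mapsTo ht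
    have hfst : φ s ≤ φ t := hφmono hs ht hst
    have e1 : (∫ x in (0:ℝ)..t, φ x) - (∫ x in (0:ℝ)..s, φ x)
        = ∫ x in s..t, φ x :=
      integral_interval_sub_left (hφint 0 t h0mem ht) (hφint 0 s h0mem hs)
    have e2 : (∫ x in (0:ℝ)..φ t, ψ x) - (∫ x in (0:ℝ)..φ s, ψ x)
        = ∫ x in (φ s)..(φ t), ψ x :=
      integral_interval_sub_left (hψint 0 (φ t) (left_mem_Icc.2 hβ.le) hft)
        (hψint 0 (φ s) (left_mem_Icc.2 hβ.le) hfs)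
    have hsub : Icc s t ⊆ Icc 0 α₂ := Icc_subset_Icc hs.1 ht.2
    have hsub' : Icc (φ s) (φ t) ⊆ Icc 0 β₂ := Icc_subset_Icc hfs.1 hft.2
    -- bounds on ∫ φ over [s,t]
    have b1 : (∫ x in s..t, φ x) ≤ (t - s) * φ t := by
      have := integral_mono_on hst (hφint s t hs ht)
        (_root_.intervalIntegrable_const (c := φ t))
        (fun x hx => hφmono (hsub hx) ht hx.2)
      simpa [smul_eq_mul] using this
    have b2 : (t - s) * φ s ≤ (∫ x in s..t, φ x) := by
      have := integral_mono_on hst (_root_.intervalIntegrable_const (c := φ s))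
        (hφint s t hs ht) (fun x hx => hφmono hs (hsub hx) hx.1)
      simpa [smul_eq_mul] using this
    -- bounds on ∫ ψ over [φ s, φ t]
    have b3 : (∫ x in (φ s)..(φ t), ψ x) ≤ (φ t - φ s) * t := by
      have := integral_mono_on hfst (hψint _ _ hfs hft)
        (_root_.intervalIntegrable_const (c := t))
        (fun x hx => by
          have := hψmono (hsub' hx) hft hx.2
          rwa [hinvL t ht] at this)
      simpa [smul_eq_mul] using this
    have b4 : (φ t - φ s) * s ≤ (∫ x in (φ s)..(φ t), ψ x) := by
      have := integral_mono_on hfst (_root_.intervalIntegrable_const (c := s))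
        (hψint _ _ hfs hft)
        (fun x hx => by
          have := hψmono hfs (hsub' hx) hx.1
          rwa [hinvL s hs] at this)
      simpa [smul_eq_mul] using this
    have hd : H t - H s = (∫ x in s..t, φ x) + (∫ x in (φ s)..(φ t), ψ x)
        - (t * φ t - s * φ s) := by
      simp only [hHdef]; linarith [e1, e2]
    rw [abs_le]
    constructor <;> nlinarith
  -- Young's equality
  have young : ∀ c ∈ Icc (0:ℝ) α₂,
      (∫ x in (0:ℝ)..c, φ x) + (∫ x in (0:ℝ)..φ c, ψ x) = c * φ c := by
    intro c hc
    have hcφ : 0 ≤ c * φ c := mul_nonneg hc.1 (hφnonneg c hc)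
    have key : ∀ n : ℕ, |H c| ≤ c * φ c / (n + 1) := by
      intro n
      have hn : (0:ℝ) < (n:ℝ) + 1 := by positivity
      have tmem : ∀ k : ℕ, (k:ℝ) ≤ (n:ℝ) + 1 → (k:ℝ) * c / (n + 1) ∈ Icc (0:ℝ) α₂ := by
        intro k hk
        constructor
        · exact div_nonneg (mul_nonneg (Nat.cast_nonneg k) hc.1) hn.le
        · have h1 : (k:ℝ) * c / (n + 1) ≤ c := by
            rw [div_le_iff₀ hn]
            nlinarith [hc.1]
          linarith [hc.2]
      have main : ∀ k : ℕ, (k:ℝ) ≤ (n:ℝ) + 1 →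
          |H ((k:ℝ) * c / (n + 1))| ≤ c / (n + 1) * φ ((k:ℝ) * c / (n + 1)) := by
        intro k
        induction k with
        | zero => intro _; simp [hH0, hφ0]
        | succ k ih =>
          intro hk1
          have hk : (k:ℝ) ≤ (n:ℝ) + 1 := by push_cast at hk1 ⊢; linarith
          have ihk := ih hk
          have hmem1 := tmem k hk
          have hmem2 := tmem (k + 1) hk1
          have hle : (k:ℝ) * c / (n + 1) ≤ ((k:ℝ) + 1) * c / (n + 1) := by
            apply div_le_div_of_nonneg_right _ hn.le
            nlinarith [hc.1]
          have hmem2' : ((k:ℝ) + 1) * c / (n + 1) ∈ Icc (0:ℝ) α₂ := by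
            push_cast at hmem2; exact hmem2
          have hs := hstep _ _ hmem1 hmem2' hle
          have hdiff : ((k:ℝ) + 1) * c / (n + 1) - (k:ℝ) * c / (n + 1) = c / (n + 1) := by
            field_simp; ring
          rw [hdiff] at hs
          have tri : |H (((k:ℝ) + 1) * c / (n + 1))| ≤
              |H ((k:ℝ) * c / (n + 1))| +
              |H (((k:ℝ) + 1) * c / (n + 1)) - H ((k:ℝ) * c / (n + 1))| := by
            calc |H (((k:ℝ) + 1) * c / (n + 1))|
                = |H ((k:ℝ) * c / (n + 1)) +
                  (H (((k:ℝ) + 1) * c / (n + 1)) - H ((k:ℝ) * c / (n + 1)))| := by ring_nf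
              _ ≤ _ := abs_add_le _ _
          push_cast
          push_cast at ihk hs
          nlinarith [tri]
      have := main (n + 1) (by push_cast; exact le_refl _)
      have hceq : ((n:ℝ) + 1) * c / (n + 1) = c := by field_simp
      push_cast at this
      rw [hceq] at this
      calc |H c| ≤ c / (n + 1) * φ c := this
        _ = c * φ c / (n + 1) := by ring
    have hH : H c = 0 := by
      by_contra h
      have habs : 0 < |H c| := abs_pos.2 h
      obtain ⟨n, hn⟩ := exists_nat_gt (c * φ c / |H c|)
      have hn1 : (0:ℝ) < (n:ℝ) + 1 := by positivity
      have : c * φ c / ((n:ℝ) + 1) < |H c| := by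
        rw [div_lt_iff₀ hn1]
        have : c * φ c / |H c| < (n:ℝ) + 1 := by linarith
        rw [div_lt_iff₀ habs] at this
        nlinarith
      linarith [key n]
    have := sub_eq_zero.1 hH
    linarith [this]
  -- main case split
  have hfa : φ a ∈ Icc 0 β₂ := hbij.mapsTo ha
  rcases le_total b (φ a) with hcase | hcase
  · -- b ≤ φ a
    have hsplit : (∫ x in (0:ℝ)..φ a, ψ x) - (∫ x in (0:ℝ)..b, ψ x)
        = ∫ x in b..(φ a), ψ x :=
      integral_interval_sub_left (hψint 0 (φ a) (left_mem_Icc.2 hβ.le) hfa)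
        (hψint 0 b (left_mem_Icc.2 hβ.le) hb)
    have hnn : 0 ≤ ∫ x in b..(φ a), ψ x := by
      apply integral_nonneg hcase
      intro x hx
      exact (hψmaps ⟨le_trans hb.1 hx.1, le_trans hx.2 hfa.2⟩).1
    have := young a ha
    have hmax := le_max_left (a * φ a) (b * ψ b)
    linarith
  · -- φ a ≤ b
    have hψb : ψ b ∈ Icc 0 α₂ := hψmaps hb
    have haψ : a ≤ ψ b := by
      have := hψmono hfa hb hcase
      rwa [hinvL a ha] at this
    have hsplit : (∫ x in (0:ℝ)..ψ b, φ x) - (∫ x in (0:ℝ)..a, φ x)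
        = ∫ x in a..(ψ b), φ x :=
      integral_interval_sub_left (hφint 0 (ψ b) h0mem hψb) (hφint 0 a h0mem ha)
    have hnn : 0 ≤ ∫ x in a..(ψ b), φ x := by
      apply integral_nonneg haψ
      intro x hx
      exact hφnonneg x ⟨le_trans ha.1 hx.1, le_trans hx.2 hψb.2⟩
    have hy := young (ψ b) hψb
    rw [hinvR b hb] at hy
    have hmax := le_max_right (a * φ a) (b * ψ b)
    nlinarith
end

section
/- Let Φ : [α₁,α₂] → ℝ and Ψ : [β₁,β₂] → ℝ be C¹ functions with strictly increasing derivatives Φ' and Ψ' such that Φ' : [α₁,α₂] → [β₁,β₂] is a bijection with inverse Ψ' : [β₁,β₂] → [α₁,α₂], and Φ(α₁) + Ψ(β₁) = α₁·β₁ with Φ'(α₁) = β₁ (i.e., Φ and Ψ are Legendre transforms of each other). Then for every a ∈ [α₁,α₂] and b ∈ [β₁,β₂] one has 0 ≤ Φ(a) + Ψ(b) − a·b ≤ −(Φ'(a) − b)·(Ψ'(b) − a), and the first inequality is an equality if and only if the second inequality is an equality. -/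
/-!
Both Φ and Ψ are strictly convex. The function y ↦ Φ (Ψ' y) + Ψ y - y Ψ' y has zero derivative,
since tangent-line inequalities for Φ and Ψ bound its increments by |z - y| |Ψ' z - Ψ' y|; by the
normalisation at β₁ it vanishes, i.e. Φ c + Ψ b = b c for c = Ψ' b, where Φ' c = b. Hence
Φ a + Ψ b - a b = Φ a - (Φ c + Φ' c (a - c)) and the gap to the upper bound is
Φ c - (Φ a + Φ' a (c - a)): both are tangent-line gaps of Φ, nonnegative and, by strict convexity,
zero exactly when a = c.
-/

open Set Topology Asymptotics

theorem StrictMonoOn.strictConvexOn_of_hasDerivWithinAt {s : Set ℝ} {f f' : ℝ → ℝ}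
    (hs : Convex ℝ s) (hf : ∀ x ∈ s, HasDerivWithinAt f (f' x) s x) (hf' : StrictMonoOn f' s) :
    StrictConvexOn ℝ s f := by
  refine StrictMonoOn.strictConvexOn_of_deriv hs (fun x hx => (hf x hx).continuousWithinAt) ?_
  refine (hf'.mono interior_subset).congr fun x hx => ?_
  exact ((hf x (interior_subset hx)).hasDerivAt (mem_interior_iff_mem_nhds.mp hx)).deriv.symm

theorem ConvexOn.add_mul_sub_le_of_hasDerivWithinAt {s : Set ℝ} {f : ℝ → ℝ} {f' x y : ℝ}
    (hf : ConvexOn ℝ s f) (hx : x ∈ s) (hy : y ∈ s) (hf' : HasDerivWithinAt f f' s x) :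
    f x + f' * (y - x) ≤ f y := by
  rcases lt_trichotomy x y with hxy | rfl | hyx
  · have := hf.le_slope_of_hasDerivWithinAt hx hy hxy hf'
    rw [slope_def_field, le_div_iff₀ (sub_pos.2 hxy)] at this
    linarith
  · simp
  · have := hf.slope_le_of_hasDerivWithinAt hy hx hyx hf'
    rw [slope_def_field, div_le_iff₀ (sub_pos.2 hyx)] at this
    linarith

theorem StrictConvexOn.add_mul_sub_lt_of_hasDerivWithinAt {s : Set ℝ} {f : ℝ → ℝ} {f' x y : ℝ}
    (hf : StrictConvexOn ℝ s f) (hx : x ∈ s) (hy : y ∈ s) (hxy : x ≠ y)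
    (hf' : HasDerivWithinAt f f' s x) : f x + f' * (y - x) < f y := by
  rcases hxy.lt_or_gt with hxy | hyx
  · have := hf.lt_slope_of_hasDerivWithinAt hx hy hxy hf'
    rw [slope_def_field, lt_div_iff₀ (sub_pos.2 hxy)] at this
    linarith
  · have := hf.slope_lt_of_hasDerivWithinAt hy hx hyx hf'
    rw [slope_def_field, div_lt_iff₀ (sub_pos.2 hyx)] at this
    linarith

theorem hasDerivWithinAt_zero_of_abs_sub_le_mul_s7 {g k : ℝ → ℝ} {s : Set ℝ} {y : ℝ}
    (hk : ContinuousWithinAt k s y) (hg : ∀ z ∈ s, |g z - g y| ≤ |z - y| * |k z - k y|) :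
    HasDerivWithinAt g 0 s y := by
  have hk₀ : (fun z => k z - k y) =o[𝓝[s] y] fun _ => (1 : ℝ) :=
    (isLittleO_one_iff ℝ).2 (tendsto_sub_nhds_zero_iff.2 hk)
  have hmul := (isBigO_refl (fun z => z - y) (𝓝[s] y)).mul_isLittleO hk₀
  simp only [mul_one] at hmul
  rw [hasDerivWithinAt_iff_isLittleO]
  refine (IsBigO.of_bound 1 (eventually_nhdsWithin_of_forall fun z hz => ?_)).trans_isLittleO hmul
  simpa [abs_mul] using hg z hz

theorem legendre_sum_sub_mul_const {s t : Set ℝ} {Φ Ψ Φ' Ψ' : ℝ → ℝ}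
    (hΦ : ConvexOn ℝ s Φ) (hΨ : ConvexOn ℝ t Ψ)
    (hΦ' : ∀ x ∈ s, HasDerivWithinAt Φ (Φ' x) s x) (hΨ' : ∀ y ∈ t, HasDerivWithinAt Ψ (Ψ' y) t y)
    (hΨ'c : ContinuousOn Ψ' t) (hmaps : MapsTo Ψ' t s) (hinv : ∀ y ∈ t, Φ' (Ψ' y) = y)
    {y₀ y : ℝ} (hy₀ : y₀ ∈ t) (hy : y ∈ t) :
    Φ (Ψ' y) + Ψ y - y * Ψ' y = Φ (Ψ' y₀) + Ψ y₀ - y₀ * Ψ' y₀ := by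
  set G : ℝ → ℝ := fun w => Φ (Ψ' w) + Ψ w - w * Ψ' w
  have hG : ∀ u ∈ t, ∀ v ∈ t, |G v - G u| ≤ |v - u| * |Ψ' v - Ψ' u| := by
    intro u hu v hv
    have hΦu := hΦ.add_mul_sub_le_of_hasDerivWithinAt (hmaps hu) (hmaps hv) (hΦ' _ (hmaps hu))
    have hΦv := hΦ.add_mul_sub_le_of_hasDerivWithinAt (hmaps hv) (hmaps hu) (hΦ' _ (hmaps hv))
    have hΨu := hΨ.add_mul_sub_le_of_hasDerivWithinAt hu hv (hΨ' u hu)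
    have hΨv := hΨ.add_mul_sub_le_of_hasDerivWithinAt hv hu (hΨ' v hv)
    rw [hinv u hu] at hΦu
    rw [hinv v hv] at hΦv
    rw [← abs_mul]
    apply abs_le_abs <;> simp only [G] <;> linarith
  have hG' : ∀ u ∈ t, HasDerivWithinAt G 0 t u := fun u hu =>
    hasDerivWithinAt_zero_of_abs_sub_le_mul_s7 (hΨ'c u hu) (hG u hu)
  have := hΨ.1.norm_image_sub_le_of_norm_hasDerivWithin_le hG' (C := 0) (by simp) hy₀ hy
  simpa [sub_eq_zero] using this

theorem young_inequality_legendre_general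
    (α₁ α₂ β₁ β₂ : ℝ) (Φ Ψ Φ' Ψ' : ℝ → ℝ)
    (hΦderiv : ∀ x ∈ Icc α₁ α₂, HasDerivWithinAt Φ (Φ' x) (Icc α₁ α₂) x)
    (hΨderiv : ∀ y ∈ Icc β₁ β₂, HasDerivWithinAt Ψ (Ψ' y) (Icc β₁ β₂) y)
    (hΨ'cont : ContinuousOn Ψ' (Icc β₁ β₂))
    (hΦ'mono : StrictMonoOn Φ' (Icc α₁ α₂))
    (hΨ'mono : StrictMonoOn Ψ' (Icc β₁ β₂))
    (hinvL : ∀ x ∈ Icc α₁ α₂, Ψ' (Φ' x) = x)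
    (hinvR : ∀ y ∈ Icc β₁ β₂, Φ' (Ψ' y) = y)
    (hΨ'maps : MapsTo Ψ' (Icc β₁ β₂) (Icc α₁ α₂))
    (hΦ'α₁ : Φ' α₁ = β₁)
    (hsum : Φ α₁ + Ψ β₁ = α₁ * β₁)
    (a b : ℝ) (ha : a ∈ Icc α₁ α₂) (hb : b ∈ Icc β₁ β₂) :
    (0 ≤ Φ a + Ψ b - a * b ∧
     Φ a + Ψ b - a * b ≤ -(Φ' a - b) * (Ψ' b - a)) ∧
    (Φ a + Ψ b - a * b = 0 ↔ Φ a + Ψ b - a * b = -(Φ' a - b) * (Ψ' b - a)) := by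
  have hΦ := hΦ'mono.strictConvexOn_of_hasDerivWithinAt (convex_Icc α₁ α₂) hΦderiv
  have hΨ := hΨ'mono.strictConvexOn_of_hasDerivWithinAt (convex_Icc β₁ β₂) hΨderiv
  have hc : Ψ' b ∈ Icc α₁ α₂ := hΨ'maps hb
  have hΦ'c : Φ' (Ψ' b) = b := hinvR b hb
  have hΨ'β₁ : Ψ' β₁ = α₁ := hΦ'α₁ ▸ hinvL α₁ (left_mem_Icc.2 (ha.1.trans ha.2))
  have hkey : Φ (Ψ' b) + Ψ b = b * Ψ' b := by
    have := legendre_sum_sub_mul_const hΦ.convexOn hΨ.convexOn hΦderiv hΨderiv hΨ'cont hΨ'maps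
      hinvR (left_mem_Icc.2 (hb.1.trans hb.2)) hb
    rw [hΨ'β₁] at this
    linarith
  have hlow := hΦ.convexOn.add_mul_sub_le_of_hasDerivWithinAt hc ha (hΦderiv _ hc)
  have hup := hΦ.convexOn.add_mul_sub_le_of_hasDerivWithinAt ha hc (hΦderiv _ ha)
  rw [hΦ'c] at hlow
  have hF₀ : Φ a + Ψ b - a * b = 0 ↔ a = Ψ' b := by
    refine ⟨fun h => by_contra fun hne => ?_, fun h => by subst h; linarith⟩
    have := hΦ.add_mul_sub_lt_of_hasDerivWithinAt hc ha (Ne.symm hne) (hΦderiv _ hc)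
    rw [hΦ'c] at this
    linarith
  have hF₁ : Φ a + Ψ b - a * b = -(Φ' a - b) * (Ψ' b - a) ↔ a = Ψ' b := by
    refine ⟨fun h => by_contra fun hne => ?_, fun h => by subst h; rw [hΦ'c]; linarith⟩
    have := hΦ.add_mul_sub_lt_of_hasDerivWithinAt ha hc hne (hΦderiv _ ha)
    linarith
  exact ⟨⟨by linarith, by linarith⟩, hF₀.trans hF₁.symm⟩

theorem young_inequality_legendre
    (α₁ α₂ β₁ β₂ : ℝ) (Φ Ψ Φ' Ψ' : ℝ → ℝ)
    (hα : α₁ < α₂) (hβ : β₁ < β₂)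
    (hΦderiv : ∀ x ∈ Icc α₁ α₂, HasDerivWithinAt Φ (Φ' x) (Icc α₁ α₂) x)
    (hΨderiv : ∀ y ∈ Icc β₁ β₂, HasDerivWithinAt Ψ (Ψ' y) (Icc β₁ β₂) y)
    (hΦ'cont : ContinuousOn Φ' (Icc α₁ α₂))
    (hΨ'cont : ContinuousOn Ψ' (Icc β₁ β₂))
    (hΦ'mono : StrictMonoOn Φ' (Icc α₁ α₂))
    (hΨ'mono : StrictMonoOn Ψ' (Icc β₁ β₂))
    (hbij : BijOn Φ' (Icc α₁ α₂) (Icc β₁ β₂))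
    (hinvL : ∀ x ∈ Icc α₁ α₂, Ψ' (Φ' x) = x)
    (hinvR : ∀ y ∈ Icc β₁ β₂, Φ' (Ψ' y) = y)
    (hΨ'maps : MapsTo Ψ' (Icc β₁ β₂) (Icc α₁ α₂))
    (hΦ'α₁ : Φ' α₁ = β₁)
    (hsum : Φ α₁ + Ψ β₁ = α₁ * β₁)
    (a b : ℝ) (ha : a ∈ Icc α₁ α₂) (hb : b ∈ Icc β₁ β₂) :
    (0 ≤ Φ a + Ψ b - a * b ∧
     Φ a + Ψ b - a * b ≤ -(Φ' a - b) * (Ψ' b - a)) ∧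
    (Φ a + Ψ b - a * b = 0 ↔ Φ a + Ψ b - a * b = -(Φ' a - b) * (Ψ' b - a)) :=
  young_inequality_legendre_general α₁ α₂ β₁ β₂ Φ Ψ Φ' Ψ' hΦderiv hΨderiv hΨ'cont hΦ'mono hΨ'mono
    hinvL hinvR hΨ'maps hΦ'α₁ hsum a b ha hb
end

section
/- Let α, β > 1 be real numbers with 1/α + 1/β = 1. Then for all real numbers a, b ≥ 0 one has 0 ≤ a^α/α + b^β/β − a·b ≤ −(a^{α−1} − b)·(b^{β−1} − a). -/
namespace Real

lemma rpow_sub_one_mul_self {x p : ℝ} (hx : 0 ≤ x) (hp : p ≠ 0) : x ^ (p - 1) * x = x ^ p := by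
  rw [← rpow_add_one' hx (by simpa using hp), sub_add_cancel]

lemma HolderConjugate.rpow_sub_one_rpow {p q x : ℝ} (hpq : p.HolderConjugate q) (hx : 0 ≤ x) :
    (x ^ (p - 1)) ^ q = x ^ p := by
  rw [← rpow_mul hx, hpq.sub_one_mul_conj]

lemma HolderConjugate.div_add_div_eq_self {p q : ℝ} (hpq : p.HolderConjugate q) (x : ℝ) :
    x / p + x / q = x := by
  rw [div_eq_mul_inv, div_eq_mul_inv, ← mul_add, hpq.inv_add_inv_eq_one, mul_one]

theorem young_gap_le_neg_mul_of_nonneg {p q a b : ℝ} (hpq : p.HolderConjugate q)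
    (ha : 0 ≤ a) (hb : 0 ≤ b) :
    a ^ p / p + b ^ q / q - a * b ≤ -(a ^ (p - 1) - b) * (b ^ (q - 1) - a) := by
  -- Expanding the right side, the claim is Young's inequality for the derivatives
  -- `a ^ (p - 1)`, `b ^ (q - 1)` with the exponents swapped.
  have hyoung : a ^ (p - 1) * b ^ (q - 1) ≤ a ^ p / q + b ^ q / p := by
    simpa only [hpq.rpow_sub_one_rpow ha, hpq.symm.rpow_sub_one_rpow hb] using
      young_inequality_of_nonneg (rpow_nonneg ha (p - 1)) (rpow_nonneg hb (q - 1)) hpq.symm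
  have hsplit_a := hpq.div_add_div_eq_self (a ^ p)
  have hsplit_b := hpq.div_add_div_eq_self (b ^ q)
  have hda := rpow_sub_one_mul_self ha hpq.ne_zero
  have hdb := rpow_sub_one_mul_self hb hpq.symm.ne_zero
  linarith

end Real

theorem young_power_inequality_with_upper_bound_general
    (α β : ℝ) (hα : 1 < α) (hconj : 1 / α + 1 / β = 1)
    (a b : ℝ) (ha : 0 ≤ a) (hb : 0 ≤ b) :
    0 ≤ a ^ α / α + b ^ β / β - a * b ∧
    a ^ α / α + b ^ β / β - a * b ≤ -(a ^ (α - 1) - b) * (b ^ (β - 1) - a) := by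
  have hαβ : α.HolderConjugate β :=
    Real.holderConjugate_iff.mpr ⟨hα, by simpa only [one_div] using hconj⟩
  exact ⟨sub_nonneg.mpr (Real.young_inequality_of_nonneg ha hb hαβ),
    Real.young_gap_le_neg_mul_of_nonneg hαβ ha hb⟩

theorem young_power_inequality_with_upper_bound
    (α β : ℝ) (hα : 1 < α) (hβ : 1 < β) (hconj : 1 / α + 1 / β = 1)
    (a b : ℝ) (ha : 0 ≤ a) (hb : 0 ≤ b) :
    0 ≤ a ^ α / α + b ^ β / β - a * b ∧
    a ^ α / α + b ^ β / β - a * b ≤ -(a ^ (α - 1) - b) * (b ^ (β - 1) - a) :=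
  young_power_inequality_with_upper_bound_general α β hα hconj a b ha hb
end
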